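/- (Total mass of the limit measure for the chiral-symmetric example.) Let C = ∑_{x=0}^{∞} (2+√2)/(2(3+2√2)^{x+2}) + ∑_{x=1}^{∞} (2+√2)/(2(3+2√2)^{x+1}), let w : ℝ → ℝ be w(x) = x²(5−x) for x ≥ 0 and w(x) = x²(1−x) for x < 0, and let f_K(x) = 1/(π(1−x²)√(1−2x²)). Then C + ∫_{−1/√2}^{1/√2} w(x)·f_K(x) dx = 1. -/

import Mathlib

noncomputable section
open Real

/-- The weight function of the absolutely continuous part for the chiral-symmetric example. -/
def wEx (x : ℝ) : ℝ := if 0 ≤ x then x ^ 2 * (5 - x) else x ^ 2 * (1 - x)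

/-- Density of the Konno distribution with parameter `1/√2`. -/
def konnoDensity (x : ℝ) : ℝ :=
  1 / (Real.pi * (1 - x ^ 2) * Real.sqrt (1 - 2 * x ^ 2))

namespace S12

def A (x : ℝ) : ℝ :=
  Real.arcsin (x / Real.sqrt (1 - x ^ 2)) - Real.arcsin (Real.sqrt 2 * x) / Real.sqrt 2

def B (x : ℝ) : ℝ :=
  Real.sqrt (1 - 2 * x ^ 2) / 2 - Real.arctan (Real.sqrt (1 - 2 * x ^ 2))

lemma hs2 : Real.sqrt 2 ^ 2 = 2 := Real.sq_sqrt (by norm_num)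
lemma hs2pos : (0:ℝ) < Real.sqrt 2 := Real.sqrt_pos.2 (by norm_num)
lemma hb2 : ((1:ℝ) / Real.sqrt 2) ^ 2 = 1 / 2 := by
  rw [div_pow, one_pow, hs2]
lemma hbpos : (0:ℝ) < 1 / Real.sqrt 2 := by positivity

lemma hA {x : ℝ} (hx : x ^ 2 < 1 / 2) :
    HasDerivAt A (x ^ 2 / ((1 - x ^ 2) * Real.sqrt (1 - 2 * x ^ 2))) x := by
  have hs2 := hs2
  have hs2pos := hs2pos
  have hu : (0:ℝ) < 1 - 2 * x ^ 2 := by linarith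
  have hv : (0:ℝ) < 1 - x ^ 2 := by nlinarith
  have hsu : (0:ℝ) < Real.sqrt (1 - 2 * x ^ 2) := Real.sqrt_pos.2 hu
  have hsv : (0:ℝ) < Real.sqrt (1 - x ^ 2) := Real.sqrt_pos.2 hv
  have hsu2 : Real.sqrt (1 - 2 * x ^ 2) ^ 2 = 1 - 2 * x ^ 2 := Real.sq_sqrt hu.le
  have hsv2 : Real.sqrt (1 - x ^ 2) ^ 2 = 1 - x ^ 2 := Real.sq_sqrt hv.le
  have hinner : HasDerivAt (fun y : ℝ => 1 - y ^ 2) (-(2 * x)) x := by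
    simpa using ((hasDerivAt_pow 2 x).const_sub 1)
  have hsqrt : HasDerivAt (fun y : ℝ => Real.sqrt (1 - y ^ 2))
      (-(2 * x) / (2 * Real.sqrt (1 - x ^ 2))) x := hinner.sqrt hv.ne'
  have hdiv : HasDerivAt (fun y : ℝ => y / Real.sqrt (1 - y ^ 2))
      ((1 * Real.sqrt (1 - x ^ 2) - x * (-(2 * x) / (2 * Real.sqrt (1 - x ^ 2)))) /
        Real.sqrt (1 - x ^ 2) ^ 2) x :=
    (hasDerivAt_id x).div hsqrt hsv.ne'
  have hratio : (x / Real.sqrt (1 - x ^ 2)) ^ 2 < 1 := by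
    rw [div_pow, hsv2, div_lt_one hv]; linarith
  have h1 : x / Real.sqrt (1 - x ^ 2) ≠ -1 := by
    intro h; rw [h] at hratio; norm_num at hratio
  have h2 : x / Real.sqrt (1 - x ^ 2) ≠ 1 := by
    intro h; rw [h] at hratio; norm_num at hratio
  have harc1 := (Real.hasDerivAt_arcsin h1 h2).comp x hdiv
  have hmul : HasDerivAt (fun y : ℝ => Real.sqrt 2 * y) (Real.sqrt 2) x := by
    simpa using (hasDerivAt_id x).const_mul (Real.sqrt 2)
  have hratio2 : (Real.sqrt 2 * x) ^ 2 < 1 := by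
    rw [mul_pow, hs2]; linarith
  have h3 : Real.sqrt 2 * x ≠ -1 := by intro h; rw [h] at hratio2; norm_num at hratio2
  have h4 : Real.sqrt 2 * x ≠ 1 := by intro h; rw [h] at hratio2; norm_num at hratio2
  have harc2 := ((Real.hasDerivAt_arcsin h3 h4).comp x hmul).div_const (Real.sqrt 2)
  have h := harc1.sub harc2
  convert h using 1
  · rfl
  · rfl
  · rfl
  have e1 : 1 - (x / Real.sqrt (1 - x ^ 2)) ^ 2 = (1 - 2 * x ^ 2) / (1 - x ^ 2) := by
    rw [div_pow, hsv2]; field_simp; ring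
  have e2 : 1 - (Real.sqrt 2 * x) ^ 2 = 1 - 2 * x ^ 2 := by rw [mul_pow, hs2]
  rw [e1, e2, Real.sqrt_div hu.le]
  field_simp
  linear_combination x ^ 2 / Real.sqrt (1 - x ^ 2 * 2) * hsv2

lemma hB {x : ℝ} (hx : x ^ 2 < 1 / 2) :
    HasDerivAt B (x ^ 3 / ((1 - x ^ 2) * Real.sqrt (1 - 2 * x ^ 2))) x := by
  have hu : (0:ℝ) < 1 - 2 * x ^ 2 := by linarith
  have hv : (0:ℝ) < 1 - x ^ 2 := by nlinarith
  have hsu : (0:ℝ) < Real.sqrt (1 - 2 * x ^ 2) := Real.sqrt_pos.2 hu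
  have hsu2 : Real.sqrt (1 - 2 * x ^ 2) ^ 2 = 1 - 2 * x ^ 2 := Real.sq_sqrt hu.le
  have hinner : HasDerivAt (fun y : ℝ => 1 - 2 * y ^ 2) (-(4 * x)) x := by
    have := ((hasDerivAt_pow 2 x).const_mul (2:ℝ)).const_sub 1
    simpa using this.congr_deriv (by ring)
  have hsqrt : HasDerivAt (fun y : ℝ => Real.sqrt (1 - 2 * y ^ 2))
      (-(4 * x) / (2 * Real.sqrt (1 - 2 * x ^ 2))) x := hinner.sqrt hu.ne'
  have h := (hsqrt.div_const 2).sub ((Real.hasDerivAt_arctan _).comp x hsqrt)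
  convert h using 1
  · rfl
  · rfl
  · rfl
  rw [hsu2]
  have h1u : (1:ℝ) + (1 - x ^ 2 * 2) ≠ 0 := by linarith
  field_simp
  ring

lemma sq_lt_half {x : ℝ} (h1 : -(1 / Real.sqrt 2) < x) (h2 : x < 1 / Real.sqrt 2) :
    x ^ 2 < 1 / 2 := by
  have := hb2
  nlinarith

lemma contA : ContinuousOn A (Set.Icc (-(1 / Real.sqrt 2)) (1 / Real.sqrt 2)) := by
  have hs : Continuous fun x : ℝ => Real.sqrt (1 - x ^ 2) :=
    (continuous_const.sub (continuous_pow 2)).sqrt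
  have hne : ∀ x ∈ Set.Icc (-(1 / Real.sqrt 2)) (1 / Real.sqrt 2),
      Real.sqrt (1 - x ^ 2) ≠ 0 := by
    intro x hx
    have hx2 : x ^ 2 ≤ 1 / 2 := by
      have := hb2; nlinarith [hx.1, hx.2]
    exact (Real.sqrt_pos.2 (by linarith)).ne'
  apply ContinuousOn.sub
  · exact Real.continuous_arcsin.comp_continuousOn
      (continuousOn_id.div hs.continuousOn hne)
  · exact ((Real.continuous_arcsin.comp (continuous_const.mul continuous_id)).div_const
      (Real.sqrt 2)).continuousOn

lemma contB : Continuous B := by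
  have hs : Continuous fun x : ℝ => Real.sqrt (1 - 2 * x ^ 2) :=
    (continuous_const.sub (continuous_const.mul (continuous_pow 2))).sqrt
  exact (hs.div_const 2).sub (Real.continuous_arctan.comp hs)

lemma sqrt_half : Real.sqrt (1 - (1 / Real.sqrt 2) ^ 2) = 1 / Real.sqrt 2 := by
  rw [hb2, show (1:ℝ) - 1 / 2 = 2⁻¹ by norm_num, Real.sqrt_inv, one_div]

lemma Ab : A (1 / Real.sqrt 2) = π / 2 - π / 2 / Real.sqrt 2 := by
  unfold A
  rw [sqrt_half, div_self hbpos.ne', mul_one_div, div_self hs2pos.ne',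
    Real.arcsin_one]

lemma Amb : A (-(1 / Real.sqrt 2)) = -(π / 2) + π / 2 / Real.sqrt 2 := by
  unfold A
  rw [neg_pow, show ((-1:ℝ))^2 = 1 by norm_num, one_mul, sqrt_half, neg_div,
    div_self hbpos.ne', mul_neg, mul_one_div, div_self hs2pos.ne',
    Real.arcsin_neg_one]
  ring

lemma A0 : A 0 = 0 := by
  unfold A
  norm_num

lemma B0 : B 0 = 1 / 2 - π / 4 := by
  unfold B
  norm_num [Real.arctan_one]

lemma Bb : B (1 / Real.sqrt 2) = 0 := by
  unfold B
  rw [show (1:ℝ) - 2 * (1 / Real.sqrt 2) ^ 2 = 0 by rw [hb2]; norm_num]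
  simp

lemma Bmb : B (-(1 / Real.sqrt 2)) = 0 := by
  unfold B
  rw [show (1:ℝ) - 2 * (-(1 / Real.sqrt 2)) ^ 2 = 0 by rw [neg_pow, hb2]; norm_num]
  simp

lemma konno_eq {x : ℝ} : konnoDensity x
    = 1 / (Real.pi * (1 - x ^ 2) * Real.sqrt (1 - 2 * x ^ 2)) := rfl

lemma derivPos {x : ℝ} (hx : x ∈ Set.Ioo (0:ℝ) (1 / Real.sqrt 2)) :
    HasDerivAt (fun y => (5 * A y - B y) / π) (wEx x * konnoDensity x) x := by
  have hx2 : x ^ 2 < 1 / 2 := sq_lt_half (by linarith [hx.1, hbpos]) hx.2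
  have hu : (0:ℝ) < 1 - 2 * x ^ 2 := by linarith
  have hv : (0:ℝ) < 1 - x ^ 2 := by nlinarith
  have hsu : (0:ℝ) < Real.sqrt (1 - 2 * x ^ 2) := Real.sqrt_pos.2 hu
  have h := (((hA hx2).const_mul 5).sub (hB hx2)).div_const π
  convert h using 1
  · rfl
  · rfl
  · rfl
  rw [wEx, if_pos hx.1.le, konno_eq]
  field_simp

lemma derivNeg {x : ℝ} (hx : x ∈ Set.Ioo (-(1 / Real.sqrt 2)) (0:ℝ)) :
    HasDerivAt (fun y => (A y - B y) / π) (wEx x * konnoDensity x) x := by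
  have hx2 : x ^ 2 < 1 / 2 := sq_lt_half hx.1 (by linarith [hx.2, hbpos])
  have hu : (0:ℝ) < 1 - 2 * x ^ 2 := by linarith
  have hv : (0:ℝ) < 1 - x ^ 2 := by nlinarith
  have hsu : (0:ℝ) < Real.sqrt (1 - 2 * x ^ 2) := Real.sqrt_pos.2 hu
  have h := ((hA hx2).sub (hB hx2)).div_const π
  convert h using 1
  · rfl
  · rfl
  · rfl
  rw [wEx, if_neg (not_le.2 hx.2), konno_eq]
  field_simp

lemma nonnegPos {x : ℝ} (hx : x ∈ Set.Ioo (0:ℝ) (1 / Real.sqrt 2)) :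
    0 ≤ wEx x * konnoDensity x := by
  have hx2 : x ^ 2 < 1 / 2 := sq_lt_half (by linarith [hx.1, hbpos]) hx.2
  have hv : (0:ℝ) < 1 - x ^ 2 := by nlinarith
  rw [wEx, if_pos hx.1.le, konno_eq]
  have h5 : x < 5 := by nlinarith
  have hsu : (0:ℝ) < Real.sqrt (1 - 2 * x ^ 2) := Real.sqrt_pos.2 (by linarith)
  apply mul_nonneg (by nlinarith)
  exact le_of_lt (by positivity)

lemma nonnegNeg {x : ℝ} (hx : x ∈ Set.Ioo (-(1 / Real.sqrt 2)) (0:ℝ)) :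
    0 ≤ wEx x * konnoDensity x := by
  have hx2 : x ^ 2 < 1 / 2 := sq_lt_half hx.1 (by linarith [hx.2, hbpos])
  have hv : (0:ℝ) < 1 - x ^ 2 := by nlinarith
  rw [wEx, if_neg (not_le.2 hx.2), konno_eq]
  have h5 : x < 1 := by nlinarith
  have hsu : (0:ℝ) < Real.sqrt (1 - 2 * x ^ 2) := Real.sqrt_pos.2 (by linarith)
  apply mul_nonneg (by nlinarith)
  exact le_of_lt (by positivity)

lemma intgPos : IntervalIntegrable (fun x => wEx x * konnoDensity x) MeasureTheory.volume
    0 (1 / Real.sqrt 2) := by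
  have hb := hbpos
  apply intervalIntegral.intervalIntegrable_deriv_of_nonneg
    (g := fun y => (5 * A y - B y) / π)
  · rw [Set.uIcc_of_le hb.le]
    apply ContinuousOn.div_const
    apply ContinuousOn.sub
    · exact (contA.mono (Set.Icc_subset_Icc (by linarith) le_rfl)).const_smul (5:ℝ) |>.congr
        (fun x _ => by simp [smul_eq_mul])
    · exact contB.continuousOn
  · rw [min_eq_left hb.le, max_eq_right hb.le]
    exact fun x hx => derivPos hx
  · rw [min_eq_left hb.le, max_eq_right hb.le]
    exact fun x hx => nonnegPos hx

lemma intgNeg : IntervalIntegrable (fun x => wEx x * konnoDensity x) MeasureTheory.volume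
    (-(1 / Real.sqrt 2)) 0 := by
  have hb := hbpos
  have hb' : (-(1 / Real.sqrt 2) : ℝ) ≤ 0 := by linarith
  apply intervalIntegral.intervalIntegrable_deriv_of_nonneg
    (g := fun y => (A y - B y) / π)
  · rw [Set.uIcc_of_le hb']
    apply ContinuousOn.div_const
    exact (contA.mono (Set.Icc_subset_Icc le_rfl (by linarith))).sub contB.continuousOn
  · rw [min_eq_left hb', max_eq_right hb']
    exact fun x hx => derivNeg hx
  · rw [min_eq_left hb', max_eq_right hb']
    exact fun x hx => nonnegNeg hx

lemma intPos : ∫ x in (0:ℝ)..(1 / Real.sqrt 2), wEx x * konnoDensity x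
    = (5 * A (1 / Real.sqrt 2) - B (1 / Real.sqrt 2)) / π - (5 * A 0 - B 0) / π := by
  have hb := hbpos
  have hcont : ContinuousOn (fun y => (5 * A y - B y) / π)
      (Set.Icc (0:ℝ) (1 / Real.sqrt 2)) := by
    apply ContinuousOn.div_const
    apply ContinuousOn.sub
    · exact (contA.mono (Set.Icc_subset_Icc (by linarith) le_rfl)).const_smul (5:ℝ) |>.congr
        (fun x _ => by simp [smul_eq_mul])
    · exact contB.continuousOn
  exact intervalIntegral.integral_eq_sub_of_hasDeriv_right_of_le hb.le hcont
    (fun x hx => (derivPos hx).hasDerivWithinAt) intgPos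

lemma intNeg : ∫ x in (-(1 / Real.sqrt 2))..(0:ℝ), wEx x * konnoDensity x
    = (A 0 - B 0) / π - (A (-(1 / Real.sqrt 2)) - B (-(1 / Real.sqrt 2))) / π := by
  have hb := hbpos
  have hb' : (-(1 / Real.sqrt 2) : ℝ) ≤ 0 := by linarith
  have hcont : ContinuousOn (fun y => (A y - B y) / π)
      (Set.Icc (-(1 / Real.sqrt 2)) (0:ℝ)) := by
    apply ContinuousOn.div_const
    exact (contA.mono (Set.Icc_subset_Icc le_rfl (by linarith))).sub contB.continuousOn
  exact intervalIntegral.integral_eq_sub_of_hasDeriv_right_of_le hb' hcont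
    (fun x hx => (derivNeg hx).hasDerivWithinAt) intgNeg

lemma sumval : ∑' x : ℕ, (2 + Real.sqrt 2) / (2 * (3 + 2 * Real.sqrt 2) ^ (x + 2))
    = (3 * Real.sqrt 2 - 4) / 4 := by
  have hs2 := hs2
  have hs2pos := hs2pos
  have hq : (1:ℝ) < 3 + 2 * Real.sqrt 2 := by nlinarith
  have hq0 : (0:ℝ) < 3 + 2 * Real.sqrt 2 := by linarith
  have hr0 : (0:ℝ) ≤ (3 + 2 * Real.sqrt 2)⁻¹ := by positivity
  have hr1 : (3 + 2 * Real.sqrt 2)⁻¹ < 1 := by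
    rw [inv_lt_one_iff₀]; right; exact hq
  have heq : ∀ x : ℕ, (2 + Real.sqrt 2) / (2 * (3 + 2 * Real.sqrt 2) ^ (x + 2))
      = ((2 + Real.sqrt 2) / (2 * (3 + 2 * Real.sqrt 2) ^ 2)) *
        ((3 + 2 * Real.sqrt 2)⁻¹) ^ x := by
    intro x
    rw [pow_add, inv_pow, div_mul_eq_div_div, div_div,
      mul_comm ((3 + 2 * Real.sqrt 2) ^ x), ← mul_assoc, div_mul_eq_div_div]
    rfl
  rw [tsum_congr heq, tsum_mul_left, tsum_geometric_of_lt_one hr0 hr1]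
  have h2 : ((3:ℝ) + 2 * Real.sqrt 2) ^ 2 = 17 + 12 * Real.sqrt 2 := by nlinarith
  rw [h2]
  have key : 1 - (3 + 2 * Real.sqrt 2)⁻¹ = (2 + 2 * Real.sqrt 2) / (3 + 2 * Real.sqrt 2) := by
    rw [eq_div_iff hq0.ne', sub_mul, inv_mul_cancel₀ hq0.ne', one_mul]
    ring
  rw [key, inv_div, div_mul_div_comm,
    div_eq_div_iff (by positivity) (by norm_num : (4:ℝ) ≠ 0)]
  linear_combination (-144 * Real.sqrt 2 - 148) * hs2

end S12

theorem stmt_12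
    (C : ℝ)
    (hC : C = (∑' x : ℕ, (2 + Real.sqrt 2) / (2 * (3 + 2 * Real.sqrt 2) ^ (x + 2)))
      + ∑' x : ℕ, (2 + Real.sqrt 2) / (2 * (3 + 2 * Real.sqrt 2) ^ ((x + 1) + 1))) :
    C + ∫ x in (-(1 / Real.sqrt 2))..(1 / Real.sqrt 2), wEx x * konnoDensity x = 1 := by
  have hsum2 : (∑' x : ℕ, (2 + Real.sqrt 2) / (2 * (3 + 2 * Real.sqrt 2) ^ ((x + 1) + 1)))
      = ∑' x : ℕ, (2 + Real.sqrt 2) / (2 * (3 + 2 * Real.sqrt 2) ^ (x + 2)) := by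
    apply tsum_congr; intro x; norm_num
  have hCval : C = (3 * Real.sqrt 2 - 4) / 2 := by
    rw [hC, hsum2, S12.sumval]; ring
  have hsplit : (∫ x in (-(1 / Real.sqrt 2))..(1 / Real.sqrt 2), wEx x * konnoDensity x)
      = (∫ x in (-(1 / Real.sqrt 2))..(0:ℝ), wEx x * konnoDensity x)
        + ∫ x in (0:ℝ)..(1 / Real.sqrt 2), wEx x * konnoDensity x := by
    rw [intervalIntegral.integral_add_adjacent_intervals S12.intgNeg S12.intgPos]
  rw [hCval, hsplit, S12.intNeg, S12.intPos, S12.Ab, S12.Amb, S12.A0, S12.B0, S12.Bb, S12.Bmb]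
  have hs2 := S12.hs2
  have hs2pos := S12.hs2pos
  have hpi := Real.pi_pos
  have hs3 : Real.sqrt 2 ^ 3 = 2 * Real.sqrt 2 := by
    rw [pow_succ, hs2]
  field_simp
  ring_nf
  linear_combination (12 * π) * hs2
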